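/- For α, β > -1 and n ≥ 1, the extended Jacobi polynomials satisfy ((1-t)/2) J_{n-1}^{α+1,β}(t) = α J_n^{α,β-1}(t) − (n+α) J_n^{α-1,β}(t). -/

import Mathlib

open Finset MeasureTheory

/-- Pochhammer symbol `(a)_m` (rising factorial). -/
noncomputable def poch (a : ℝ) (m : ℕ) : ℝ := (ascPochhammer ℝ m).eval a

/-- Extended Jacobi polynomial `J_n^{α,β}(t)`.  Terms with vanishing denominator
(which are exactly the terms with index below `ι₀`) are `0` by the division
convention, so this agrees with the paper's definition. -/
noncomputable def J (α β : ℝ) (n : ℕ) (t : ℝ) : ℝ :=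
  ∑ k ∈ Finset.range (n + 1),
    poch ((k : ℝ) + α + 1) (n - k) /
      (((n - k).factorial : ℝ) * (k.factorial : ℝ) *
        poch ((n : ℝ) + α + β + (k : ℝ) + 1) (n - k)) *
      ((t - 1) / 2) ^ k

/-- Classical Jacobi polynomial `P_n^{(α,β)}(t)`. -/
noncomputable def P (α β : ℝ) (n : ℕ) (t : ℝ) : ℝ :=
  ∑ k ∈ Finset.range (n + 1),
    poch ((k : ℝ) + α + 1) (n - k) * poch ((n : ℝ) + α + β + 1) k /
      (((n - k).factorial : ℝ) * (k.factorial : ℝ)) * ((t - 1) / 2) ^ k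


/-! Compare coefficients of `((t - 1) / 2) ^ k`. The `k`-th denominators of the three sums
agree up to the factor `k!`, so everything reduces to the Pochhammer recurrence
`(a)_m (a + m) = a (a + 1)_m`: the constant terms on the right cancel, and the `(k + 1)`-st
coefficient on the right is `-(k + 1) / (k + 1)! = -1 / k!` times the numerator of the `k`-th
coefficient of `J_{n-1}^{α+1,β}`, which is what multiplying by `(1 - t) / 2 = -(t - 1) / 2`
produces on the left. -/

lemma poch_succ_left (a : ℝ) (m : ℕ) : poch a (m + 1) = a * poch (a + 1) m := by
  simp [poch, ascPochhammer_succ_left, Polynomial.eval_comp]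

lemma poch_mul_add (a : ℝ) (m : ℕ) : poch a m * (a + m) = a * poch (a + 1) m := by
  rw [← poch_succ_left, poch, poch, ascPochhammer_succ_eval]

noncomputable def jacobiCoeff (α β : ℝ) (n k : ℕ) : ℝ :=
  poch ((k : ℝ) + α + 1) (n - k) /
    (((n - k).factorial : ℝ) * (k.factorial : ℝ) * poch ((n : ℝ) + α + β + (k : ℝ) + 1) (n - k))

lemma J_eq_sum_jacobiCoeff (α β : ℝ) (n : ℕ) (t : ℝ) :
    J α β n t = ∑ k ∈ range (n + 1), jacobiCoeff α β n k * ((t - 1) / 2) ^ k :=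
  rfl

lemma jacobiCoeff_zero_contiguous (α β : ℝ) (n : ℕ) :
    α * jacobiCoeff α (β - 1) n 0 = ((n : ℝ) + α) * jacobiCoeff (α - 1) β n 0 := by
  have h := poch_mul_add α n
  simp only [jacobiCoeff, Nat.cast_zero, zero_add, Nat.sub_zero, sub_add_cancel,
    show (n : ℝ) + α + (β - 1) = n + (α - 1) + β by ring]
  rw [mul_div_assoc', mul_div_assoc']
  congr 1
  linear_combination -h

lemma jacobiCoeff_succ_contiguous (α β : ℝ) {m j : ℕ} (hj : j ≤ m) :
    α * jacobiCoeff α (β - 1) (m + 1) (j + 1)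
        - ((m + 1 : ℕ) + α) * jacobiCoeff (α - 1) β (m + 1) (j + 1)
      = -jacobiCoeff (α + 1) β m j := by
  have h := poch_mul_add ((j : ℝ) + α + 1) (m - j)
  rw [Nat.cast_sub hj] at h
  simp only [jacobiCoeff, Nat.succ_sub_succ, Nat.factorial_succ]
  push_cast
  rw [show (j : ℝ) + 1 + α + 1 = j + α + 1 + 1 by ring,
    show (j : ℝ) + (α + 1) + 1 = j + α + 1 + 1 by ring,
    show (j : ℝ) + 1 + (α - 1) + 1 = j + α + 1 by ring,
    show (m : ℝ) + 1 + α + (β - 1) + (j + 1) + 1 = m + (α + 1) + β + j + 1 by ring,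
    show (m : ℝ) + 1 + (α - 1) + β + (j + 1) + 1 = m + (α + 1) + β + j + 1 by ring]
  generalize poch ((j : ℝ) + α + 1 + 1) (m - j) = A at h ⊢
  generalize poch ((j : ℝ) + α + 1) (m - j) = B at h ⊢
  rw [mul_left_comm _ ((j : ℝ) + 1), mul_assoc ((j : ℝ) + 1)]
  generalize ((m - j).factorial : ℝ) * (j.factorial : ℝ) * poch ((m : ℝ) + (α + 1) + β + j + 1) (m - j) = D
  have hj1 : (j : ℝ) + 1 ≠ 0 := by positivity
  rw [mul_div_assoc', mul_div_assoc', div_sub_div_same,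
    show α * A - (m + 1 + α) * B = (j + 1) * -A by linear_combination -h,
    mul_div_mul_left _ _ hj1, neg_div]

theorem stmt9_general (α β : ℝ) (n : ℕ) (hn : 1 ≤ n) (t : ℝ) :
    (1 - t) / 2 * J (α + 1) β (n - 1) t =
      α * J α (β - 1) n t - ((n : ℝ) + α) * J (α - 1) β n t := by
  obtain ⟨m, rfl⟩ := Nat.exists_eq_add_of_le' hn
  set x := (t - 1) / 2
  calc (1 - t) / 2 * J (α + 1) β (m + 1 - 1) t
      = ∑ j ∈ range (m + 1), -jacobiCoeff (α + 1) β m j * x ^ (j + 1) := by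
        rw [Nat.add_sub_cancel, J_eq_sum_jacobiCoeff, mul_sum]
        exact sum_congr rfl fun j _ => by ring
    _ = ∑ k ∈ range (m + 1 + 1), (α * jacobiCoeff α (β - 1) (m + 1) k
          - ((m + 1 : ℕ) + α) * jacobiCoeff (α - 1) β (m + 1) k) * x ^ k := by
        rw [sum_range_succ' _ (m + 1), jacobiCoeff_zero_contiguous, sub_self, zero_mul, add_zero]
        refine sum_congr rfl fun j hj => ?_
        rw [jacobiCoeff_succ_contiguous α β (mem_range_succ_iff.mp hj)]
    _ = α * J α (β - 1) (m + 1) t - ((m + 1 : ℕ) + α) * J (α - 1) β (m + 1) t := by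
        simp only [J_eq_sum_jacobiCoeff, mul_sum, ← sum_sub_distrib]
        exact sum_congr rfl fun k _ => by ring

theorem stmt9 (α β : ℝ) (hα : -1 < α) (hβ : -1 < β) (n : ℕ) (hn : 1 ≤ n) (t : ℝ) :
    (1 - t) / 2 * J (α + 1) β (n - 1) t =
      α * J α (β - 1) n t - ((n : ℝ) + α) * J (α - 1) β n t :=
  stmt9_general α β n hn t
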